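/- For every n ≥ 1, the operator identity expansion (∂_ψ − id)^n applied to X^{n−1} gives (∂_ψ − id)^n(X^{n−1}) = Σ_{k=1}^{n} (−1)^k·C(n,k)·(n−1)_ψ^{\underline{n−k}}·X^{k−1}, where C(n,k) is the ordinary binomial coefficient and (m)_ψ^{\underline{j}} := ∏_{i=0}^{j−1} (m−i)_ψ denotes the ψ-falling factorial (with (m)_ψ^{\underline{0}} := 1). -/

import Mathlib

open Polynomial Finset

/-!
Since `D` commutes with the identity, the binomial theorem expands `(D - 1)^n` as
`∑ₖ (-1)^k C(n,k) D^(n-k)`. Each power `D^j` lowers `X^m` to `X^(m-j)` with the falling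
factorial `∏_{i<j} (m-i)_ψ` as coefficient when `j ≤ m`, and kills it when `j > m`; on `X^(n-1)`
only the term `k = 0` dies, and the others are exactly the claimed summands.
-/

theorem Module.End.sub_one_pow_apply {R M : Type*} [CommRing R] [AddCommGroup M] [Module R M]
    (f : Module.End R M) (n : ℕ) (v : M) :
    ((f - 1) ^ n) v = ∑ k ∈ range (n + 1), ((-1 : R) ^ k * n.choose k) • (f ^ (n - k)) v := by
  have h_neg_one : (-1 : Module.End R M) = algebraMap R _ (-1) := by simp
  rw [sub_eq_neg_add, (Commute.neg_one_left f).add_pow, LinearMap.sum_apply]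
  refine sum_congr rfl fun k _ => ?_
  rw [h_neg_one, ← map_pow, Module.End.mul_apply, Module.End.mul_apply,
    Module.algebraMap_end_apply, Module.End.natCast_apply, map_nsmul, ← Nat.cast_smul_eq_nsmul R,
    smul_smul, mul_comm]

section LoweringOperator

variable {R : Type*} [CommSemiring R] {c : ℕ → R} {D : R[X] →ₗ[R] R[X]}

theorem pow_apply_X_pow_of_le (hD : ∀ n, D (X ^ (n + 1)) = c (n + 1) • X ^ n) {j m : ℕ}
    (h : j ≤ m) : (D ^ j) (X ^ m) = (∏ i ∈ range j, c (m - i)) • X ^ (m - j) := by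
  induction j with
  | zero => simp
  | succ j ih =>
    rw [pow_succ', Module.End.mul_apply, ih (by omega), map_smul,
      show m - j = (m - (j + 1)) + 1 by omega, hD, prod_range_succ, smul_smul,
      show m - (j + 1) + 1 = m - j by omega]

theorem pow_apply_X_pow_of_lt (hD : ∀ n, D (X ^ (n + 1)) = c (n + 1) • X ^ n) (hD1 : D 1 = 0)
    {j m : ℕ} (h : m < j) : (D ^ j) (X ^ m) = 0 := by
  obtain ⟨t, rfl⟩ : ∃ t, j = t + (m + 1) := ⟨j - (m + 1), by omega⟩
  rw [pow_add, Module.End.mul_apply, pow_succ', Module.End.mul_apply,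
    pow_apply_X_pow_of_le hD le_rfl, Nat.sub_self, pow_zero, map_smul, hD1, smul_zero, map_zero]

end LoweringOperator

theorem stmt13_general {K : Type*} [Field K]
    (nψ : ℕ → K)
    (D : Polynomial K →ₗ[K] Polynomial K)
    (hD : ∀ n : ℕ, D (X ^ (n + 1)) = nψ (n + 1) • X ^ n)
    (hD1 : D 1 = 0) :
    ∀ n : ℕ, 1 ≤ n →
      (((D - LinearMap.id : Module.End K (Polynomial K)) ^ n) (X ^ (n - 1))) =
        ∑ k ∈ Finset.Icc 1 n,
          ((-1 : K) ^ k * (n.choose k : K) *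
            ∏ i ∈ Finset.range (n - k), nψ (n - 1 - i)) • X ^ (k - 1) := by
  intro n hn
  rw [← Module.End.one_eq_id, Module.End.sub_one_pow_apply, range_eq_Ico,
    sum_eq_sum_Ico_succ_bot (by omega), Nat.sub_zero, pow_apply_X_pow_of_lt hD hD1 (by omega),
    smul_zero, zero_add, zero_add, Ico_add_one_right_eq_Icc]
  refine sum_congr rfl fun k hk => ?_
  have hk : 1 ≤ k ∧ k ≤ n := mem_Icc.mp hk
  rw [pow_apply_X_pow_of_le hD (by omega), smul_smul, show n - 1 - (n - k) = k - 1 by omega]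

/-- For every `n ≥ 1`,
`(∂_ψ − id)^n (X^(n-1)) = Σ_{k=1}^{n} (−1)^k C(n,k) (n−1)_ψ^{\underline{n−k}} • X^(k-1)`,
where `C(n,k)` is the ordinary binomial coefficient and
`(m)_ψ^{\underline{j}} := ∏_{i=0}^{j−1} (m−i)_ψ` is the ψ-falling factorial. -/
theorem stmt13 {K : Type*} [Field K] [CharZero K]
    (ψ : ℕ → K) (hψ : ∀ n, ψ n ≠ 0)
    (nψ : ℕ → K) (hnψ0 : nψ 0 = 0)
    (hnψ : ∀ n : ℕ, 1 ≤ n → nψ n = ψ (n - 1) / ψ n)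
    (hadm : ∀ n : ℕ, 1 ≤ n → nψ n ≠ 0)
    (D : Polynomial K →ₗ[K] Polynomial K)
    (hD : ∀ n : ℕ, D (X ^ (n + 1)) = nψ (n + 1) • X ^ n)
    (hD1 : D 1 = 0) :
    ∀ n : ℕ, 1 ≤ n →
      (((D - LinearMap.id : Module.End K (Polynomial K)) ^ n) (X ^ (n - 1))) =
        ∑ k ∈ Finset.Icc 1 n,
          ((-1 : K) ^ k * (n.choose k : K) *
            ∏ i ∈ Finset.range (n - k), nψ (n - 1 - i)) • X ^ (k - 1) :=
  stmt13_general nψ D hD hD1
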